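/- arXiv:1508.01068 — 2 statements merged into one kernel-verified Lean document; each statement's English description precedes it below -/
import Mathlib

section
/- Let δ, γ be nonzero ordinals, τ an ordinal, and Σ = ⟨S_β : β < τ⟩ a partition of δ*. For any two basic sets B₁, B₂ of ⟨L^{δ,γ}, I^{Σ,γ}⟩, either B₁ ⊆ B₂, or B₂ ⊆ B₁, or B₁ ∩ B₂ = ∅. -/
open Ordinal Cardinal

abbrev SOrd : Type 1 := Ordinalᵒᵈ ⊕ₗ Ordinal

namespace SOrd
def neg (α : Ordinal) : SOrd := toLex (Sum.inl (OrderDual.toDual α))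
def pos (α : Ordinal) : SOrd := toLex (Sum.inr α)
def IsPos (a : SOrd) : Prop := ∃ α : Ordinal, a = pos α
def val (a : SOrd) : Ordinal := Sum.elim (fun b => OrderDual.ofDual b) id (ofLex a)
end SOrd

def IsBetween (δ : Ordinal) (a : SOrd) : Prop := SOrd.neg δ < a ∧ a < SOrd.pos δ

def Lset (δ γ : Ordinal) : Set (List SOrd) :=
  {x | x ≠ [] ∧ (∃ h : 0 < x.length, ∃ α < γ, x[0]'h = SOrd.pos α) ∧
    ∀ k, ∀ h : k < x.length, 0 < k → IsBetween δ (x[k]'h)}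

def Llt (x y : List SOrd) : Prop :=
  (∃ k, ∃ hx : k < x.length, ∃ hy : k < y.length,
      x.take k = y.take k ∧ x[k]'hx < y[k]'hy) ∨
  (∃ hy : x.length < y.length, y.take x.length = x ∧ SOrd.IsPos (y[x.length]'hy)) ∨
  (∃ hx : y.length < x.length, x.take y.length = y ∧ ¬ SOrd.IsPos (x[y.length]'hx))

/-- `S` (as the indexed family `⟨S β : β < τ⟩`, where each `ξ ∈ S β` codes the
negative ordinal `ξ*`) is a partition of `δ*`. -/
def IsPartition (δ τ : Ordinal) (S : Ordinal → Set Ordinal) : Prop :=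
  (∀ β, S β ⊆ Set.Iio δ) ∧ (∀ β, τ ≤ β → S β = ∅) ∧ (∀ ξ, ξ < δ → ∃! β, ξ ∈ S β)

/-- `β^Σ(ξ*)`: the index of the piece of the partition containing `ξ*`. -/
noncomputable def colorOf (S : Ordinal → Set Ordinal) (ξ : Ordinal) : Ordinal :=
  sInf {β | ξ ∈ S β}

/-- The index set `r_x`. -/
def rIdx (τ : Ordinal) (x : List SOrd) : Set ℕ :=
  {i | ∃ h : i < x.length, 2 ≤ i ∧ i % 2 = 0 ∧ x[i]'h < SOrd.pos τ}

/-- `Σ`-relevant sequences. -/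
def Relevant (δ γ τ : Ordinal) (S : Ordinal → Set Ordinal) (x : List SOrd) : Prop :=
  x ∈ Lset δ γ ∧ 3 ≤ x.length ∧ x.length % 2 = 1 ∧
  (∀ i, ∀ h : i < x.length, (SOrd.IsPos (x[i]'h) ↔ i % 2 = 0)) ∧
  (∀ i ∈ rIdx τ x, ∀ j ∈ rIdx τ x, i < j →
    ∀ (hi : i - 1 < x.length) (hj : j - 1 < x.length),
      colorOf S (x[j-1]'hj).val < colorOf S (x[i-1]'hi).val) ∧
  x.length - 1 ∈ rIdx τ x

/-- `J^{Σ,γ}_x = {z ∈ L^{δ,γ} : x↾(|x|-1) ≤ z < x}`. -/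
def Jset (δ γ : Ordinal) (x : List SOrd) : Set (List SOrd) :=
  {z ∈ Lset δ γ | (z = x.take (x.length - 1) ∨ Llt (x.take (x.length - 1)) z) ∧ Llt z x}

/-- The initial segment `L^{δ,γ}_α = {z : z < ⟨α⟩}` (equal to `L^{δ,γ}` when `α = γ`). -/
def Lbelow (δ γ α : Ordinal) : Set (List SOrd) :=
  {z ∈ Lset δ γ | Llt z [SOrd.pos α]}

/-- `L^{δ,γ}_x = {z ∈ L^{δ,γ} : z < x}`. -/
def Lx (δ γ : Ordinal) (x : List SOrd) : Set (List SOrd) :=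
  {z ∈ Lset δ γ | Llt z x}

/-- The basic sets of `I^{Σ,γ}`. -/
def IsBasic (δ γ τ : Ordinal) (S : Ordinal → Set Ordinal) (B : Set (List SOrd)) : Prop :=
  (∃ α ≤ γ, B = Lbelow δ γ α) ∨
  (∃ x, Relevant δ γ τ S x ∧ B = Jset δ γ x) ∨
  (∃ z ∈ Lset δ γ, B = ({z} : Set (List SOrd)))

/-- `I^{Σ,γ}`: finite unions of basic sets. -/
def Ifam (δ γ τ : Ordinal) (S : Ordinal → Set Ordinal) : Set (Set (List SOrd)) :=
  {A | ∃ E : Finset (Set (List SOrd)), (∀ B ∈ E, IsBasic δ γ τ S B) ∧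
    A = ⋃ B ∈ E, (B : Set (List SOrd))}

/-- `I^{Σ,γ}_x = {A ⊆ L^{δ,γ}_x : A ∈ I^{Σ,γ}}`. -/
def Ix (δ γ τ : Ordinal) (S : Ordinal → Set Ordinal) (x : List SOrd) : Set (Set (List SOrd)) :=
  {A | A ⊆ Lx δ γ x ∧ A ∈ Ifam δ γ τ S}

/-!
Compare finite sequences after padding them with a marker `gap` that lies above every negative
and below every positive entry: `<` on sequences becomes the lexicographic order on
`ℕ → GapOrd`, hence a strict linear order. Apart from singletons, every basic set is
`L^{δ,γ} ∩ [x↾(|x|-1), x)`; the initial segment `L^{δ,γ}_α` is the case `x = ⟨α⟩`, since `⟨⟩`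
lies below all of `L^{δ,γ}`. Every member of `[p, x)`, where `p = x↾(|x|-1)`, extends `p`, and if
`q` is a prefix of neither `p` nor `x`, every extension of `q` is compared with `p` and with `x`
as `q` is. So if two such intervals meet, the lower endpoint `q` of one extends the lower
endpoint `p` of the other; either `q = p` and the intervals are nested, or the whole interval
starting at `q` lies in the one starting at `p`.
-/

abbrev GapOrd : Type 1 := Ordinalᵒᵈ ⊕ₗ WithBot Ordinal

def GapOrd.gap : GapOrd := toLex (Sum.inr ⊥)

namespace SOrd

def toGap (a : SOrd) : GapOrd := toLex (Sum.map id WithBot.some (ofLex a))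

lemma neg_or_pos (a : SOrd) : (∃ α, a = neg α) ∨ ∃ β, a = pos β := by
  rcases h : ofLex a with ξ | β
  · exact Or.inl ⟨ξ.ofDual, congrArg toLex h⟩
  · exact Or.inr ⟨β, congrArg toLex h⟩

lemma not_isPos_neg (α : Ordinal) : ¬ IsPos (neg α) := by
  rintro ⟨β, h⟩
  cases congrArg ofLex h

lemma toGap_lt_toGap {a b : SOrd} : a.toGap < b.toGap ↔ a < b := by
  rcases neg_or_pos a with ⟨α, rfl⟩ | ⟨β, rfl⟩ <;>
    rcases neg_or_pos b with ⟨α', rfl⟩ | ⟨β', rfl⟩ <;> simp [toGap, neg, pos]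

lemma toGap_strictMono : StrictMono toGap := fun _ _ => toGap_lt_toGap.2

lemma gap_lt_toGap {a : SOrd} : GapOrd.gap < a.toGap ↔ a.IsPos := by
  rcases neg_or_pos a with ⟨α, rfl⟩ | ⟨β, rfl⟩
  · exact iff_of_false (by simp [toGap, GapOrd.gap, neg]) (not_isPos_neg α)
  · exact iff_of_true (by simp [toGap, GapOrd.gap, pos]) ⟨β, rfl⟩

lemma toGap_lt_gap {a : SOrd} : a.toGap < GapOrd.gap ↔ ¬ a.IsPos := by
  rcases neg_or_pos a with ⟨α, rfl⟩ | ⟨β, rfl⟩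
  · exact iff_of_true (by simp [toGap, GapOrd.gap, neg]) (not_isPos_neg α)
  · exact iff_of_false (by simp [toGap, GapOrd.gap, pos]) (not_not.2 ⟨β, rfl⟩)

lemma toGap_ne_gap (a : SOrd) : a.toGap ≠ GapOrd.gap := by
  by_cases h : a.IsPos
  · exact (gap_lt_toGap.2 h).ne'
  · exact (toGap_lt_gap.2 h).ne

end SOrd

theorem toLex_lt_toLex_iff_exists {β : Type*} [LT β] {s t : ℕ → β} :
    toLex s < toLex t ↔ ∃ i, (∀ j < i, s j = t j) ∧ s i < t i := Iff.rfl

theorem toLex_lt_toLex_iff_of_agree {β : Type*} [LinearOrder β] {s t : ℕ → β} {k : ℕ}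
    (h : ∀ j < k, s j = t j) (hk : s k ≠ t k) : toLex s < toLex t ↔ s k < t k := by
  rw [toLex_lt_toLex_iff_exists]
  refine ⟨fun ⟨i, hi, hlt⟩ => ?_, fun hlt => ⟨k, h, hlt⟩⟩
  rcases lt_trichotomy i k with hik | rfl | hki
  · exact absurd (h i hik) hlt.ne
  · exact hlt
  · exact absurd (hi k hki) hk

def padSeq (x : List SOrd) (i : ℕ) : GapOrd := (x[i]?.map SOrd.toGap).getD GapOrd.gap

section padSeq

variable {x y : List SOrd} {i j k : ℕ}

lemma padSeq_of_lt (h : i < x.length) : padSeq x i = x[i].toGap := by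
  simp [padSeq, h]

lemma padSeq_of_le (h : x.length ≤ i) : padSeq x i = GapOrd.gap := by
  simp [padSeq, h]

lemma padSeq_take (h : j < k) : padSeq (x.take k) j = padSeq x j := by
  simp [padSeq, h]

lemma take_eq_take_of_padSeq (h : ∀ j < k, padSeq x j = padSeq y j) (hk : k ≤ x.length) :
    x.take k = y.take k := by
  refine List.ext_getElem? fun j => ?_
  simp only [List.getElem?_take]
  split_ifs with hj
  · have hjx : j < x.length := hj.trans_le hk
    have hxy := h j hj
    rw [padSeq_of_lt hjx] at hxy
    have hjy : j < y.length := by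
      by_contra hjy
      exact SOrd.toGap_ne_gap _ (hxy.trans (padSeq_of_le (not_lt.1 hjy)))
    rw [padSeq_of_lt hjy] at hxy
    rw [List.getElem?_eq_getElem hjx, List.getElem?_eq_getElem hjy,
      SOrd.toGap_strictMono.injective hxy]
  · rfl

lemma length_le_of_padSeq (h : ∀ j < i, padSeq x j = padSeq y j) (hy : y.length < i) :
    x.length ≤ y.length := by
  by_contra hx
  have hxy := h y.length hy
  rw [padSeq_of_lt (not_le.1 hx), padSeq_of_le le_rfl] at hxy
  exact SOrd.toGap_ne_gap _ hxy

lemma prefix_iff_padSeq : x <+: y ↔ ∀ j < x.length, padSeq x j = padSeq y j := by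
  refine ⟨fun h j hj => ?_, fun h => ?_⟩
  · rw [List.prefix_iff_eq_take.1 h, padSeq_take hj]
  · rw [List.prefix_iff_eq_take, ← take_eq_take_of_padSeq h le_rfl, List.take_length]

lemma padSeq_injective : Function.Injective padSeq := by
  intro x y h
  have hxy : x <+: y := prefix_iff_padSeq.2 fun j _ => congrFun h j
  have hyx : y <+: x := prefix_iff_padSeq.2 fun j _ => (congrFun h j).symm
  exact hxy.eq_of_length (hxy.length_le.antisymm hyx.length_le)

lemma llt_iff_padSeq_lt : Llt x y ↔ toLex (padSeq x) < toLex (padSeq y) := by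
  rw [toLex_lt_toLex_iff_exists]
  constructor
  · rintro (⟨k, hkx, hky, htake, hlt⟩ | ⟨hy, htake, hpos⟩ | ⟨hx, htake, hneg⟩)
    · refine ⟨k, fun j hj => ?_, ?_⟩
      · rw [← padSeq_take hj, htake, padSeq_take hj]
      · rwa [padSeq_of_lt hkx, padSeq_of_lt hky, SOrd.toGap_lt_toGap]
    · refine ⟨x.length, fun j hj => ?_, ?_⟩
      · rw [← htake, padSeq_take hj]
      · rwa [padSeq_of_le le_rfl, padSeq_of_lt hy, SOrd.gap_lt_toGap]
    · refine ⟨y.length, fun j hj => ?_, ?_⟩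
      · rw [← htake, padSeq_take hj]
      · rwa [padSeq_of_lt hx, padSeq_of_le le_rfl, SOrd.toGap_lt_gap]
  · rintro ⟨i, hagree, hlt⟩
    by_cases hx : i < x.length <;> by_cases hy : i < y.length
    · refine Or.inl ⟨i, hx, hy, take_eq_take_of_padSeq hagree hx.le, ?_⟩
      rwa [padSeq_of_lt hx, padSeq_of_lt hy, SOrd.toGap_lt_toGap] at hlt
    · obtain rfl : i = y.length := le_antisymm
        (not_lt.1 fun hyi => (length_le_of_padSeq hagree hyi).not_gt (hyi.trans hx)) (not_lt.1 hy)
      refine Or.inr (Or.inr ⟨hx, ?_, ?_⟩)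
      · rw [← take_eq_take_of_padSeq (fun j hj => (hagree j hj).symm) le_rfl, List.take_length]
      · rwa [padSeq_of_lt hx, padSeq_of_le le_rfl, SOrd.toGap_lt_gap] at hlt
    · have hagree' : ∀ j < i, padSeq y j = padSeq x j := fun j hj => (hagree j hj).symm
      obtain rfl : i = x.length := le_antisymm
        (not_lt.1 fun hxi => (length_le_of_padSeq hagree' hxi).not_gt (hxi.trans hy)) (not_lt.1 hx)
      refine Or.inr (Or.inl ⟨hy, ?_, ?_⟩)
      · rw [← take_eq_take_of_padSeq hagree le_rfl, List.take_length]
      · rwa [padSeq_of_le le_rfl, padSeq_of_lt hy, SOrd.gap_lt_toGap] at hlt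
    · rw [padSeq_of_le (not_lt.1 hx), padSeq_of_le (not_lt.1 hy)] at hlt
      exact absurd hlt (lt_irrefl _)

end padSeq

section Llt

variable {x y z q a w : List SOrd}

lemma llt_irrefl (x : List SOrd) : ¬ Llt x x := by
  rw [llt_iff_padSeq_lt]
  exact lt_irrefl _

lemma llt_trans (hxy : Llt x y) (hyz : Llt y z) : Llt x z := by
  rw [llt_iff_padSeq_lt] at *
  exact hxy.trans hyz

lemma llt_asymm (hxy : Llt x y) : ¬ Llt y x := fun hyx => llt_irrefl x (llt_trans hxy hyx)

lemma llt_or_llt_of_ne (h : x ≠ y) : Llt x y ∨ Llt y x := by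
  simp only [llt_iff_padSeq_lt]
  exact lt_or_gt_of_ne fun hxy => h (padSeq_injective (toLex_inj.1 hxy))

lemma llt_iff_of_not_prefix (hqa : ¬ q <+: a) (hqw : q <+: w) :
    (Llt w a ↔ Llt q a) ∧ (Llt a w ↔ Llt a q) := by
  classical
  rw [prefix_iff_padSeq] at hqa hqw
  push Not at hqa
  obtain ⟨hkq, hk⟩ := Nat.find_spec hqa
  have hqa_below : ∀ j < Nat.find hqa, padSeq q j = padSeq a j := fun j hj =>
    by_contra fun hne => Nat.find_min hqa hj ⟨hj.trans hkq, hne⟩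
  have hwq : ∀ j ≤ Nat.find hqa, padSeq w j = padSeq q j := fun j hj =>
    (hqw j (hj.trans_lt hkq)).symm
  have hwa_below : ∀ j < Nat.find hqa, padSeq w j = padSeq a j := fun j hj =>
    (hwq j hj.le).trans (hqa_below j hj)
  have hwk : padSeq w (Nat.find hqa) = padSeq q (Nat.find hqa) := hwq _ le_rfl
  simp only [llt_iff_padSeq_lt]
  rw [toLex_lt_toLex_iff_of_agree hwa_below (hwk ▸ hk), toLex_lt_toLex_iff_of_agree hqa_below hk,
    toLex_lt_toLex_iff_of_agree (fun j hj => (hwa_below j hj).symm) (hwk ▸ hk.symm),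
    toLex_lt_toLex_iff_of_agree (fun j hj => (hqa_below j hj).symm) hk.symm, hwk]
  exact ⟨Iff.rfl, Iff.rfl⟩

end Llt

def NestedOrDisjoint {α : Type*} (A B : Set α) : Prop := A ⊆ B ∨ B ⊆ A ∨ A ∩ B = ∅

namespace NestedOrDisjoint

variable {α : Type*} {A B : Set α}

lemma symm (h : NestedOrDisjoint A B) : NestedOrDisjoint B A := by
  rcases h with h | h | h
  · exact Or.inr (Or.inl h)
  · exact Or.inl h
  · exact Or.inr (Or.inr (Set.inter_comm A B ▸ h))

lemma inter (h : NestedOrDisjoint A B) (C : Set α) : NestedOrDisjoint (C ∩ A) (C ∩ B) := by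
  rcases h with h | h | h
  · exact Or.inl (Set.inter_subset_inter_right C h)
  · exact Or.inr (Or.inl (Set.inter_subset_inter_right C h))
  · refine Or.inr (Or.inr (Set.subset_empty_iff.1 ?_))
    exact h ▸ Set.inter_subset_inter Set.inter_subset_right Set.inter_subset_right

lemma singleton (z : α) (B : Set α) : NestedOrDisjoint {z} B := by
  by_cases hz : z ∈ B
  · exact Or.inl (Set.singleton_subset_iff.2 hz)
  · exact Or.inr (Or.inr (Set.singleton_inter_eq_empty.2 hz))

lemma of_nonempty_imp (h : (A ∩ B).Nonempty → NestedOrDisjoint A B) : NestedOrDisjoint A B := by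
  by_cases hAB : (A ∩ B).Nonempty
  · exact h hAB
  · exact Or.inr (Or.inr (Set.not_nonempty_iff_eq_empty.1 hAB))

end NestedOrDisjoint

def dropLastIco (x : List SOrd) : Set (List SOrd) :=
  {z | (z = x.dropLast ∨ Llt x.dropLast z) ∧ Llt z x}

section DropLastIco

variable {x y z q : List SOrd}

lemma dropLast_prefix_of_mem_dropLastIco (hz : z ∈ dropLastIco x) : x.dropLast <+: z := by
  by_contra hpz
  have hzp : Llt z x.dropLast :=
    ((llt_iff_of_not_prefix hpz x.dropLast_prefix).2).1 hz.2
  rcases hz.1 with rfl | hpz'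
  · exact llt_irrefl _ hzp
  · exact llt_asymm hzp hpz'

lemma mem_dropLastIco_iff_of_not_prefix (hqp : ¬ q <+: x.dropLast) (hqx : ¬ q <+: x)
    (hqz : q <+: z) : z ∈ dropLastIco x ↔ q ∈ dropLastIco x := by
  have hz : z ≠ x.dropLast := fun h => hqp (h ▸ hqz)
  have hq : q ≠ x.dropLast := fun h => hqp (h ▸ List.prefix_refl q)
  simp only [dropLastIco, Set.mem_ofPred_eq, hz, hq, false_or,
    (llt_iff_of_not_prefix hqp hqz).2, (llt_iff_of_not_prefix hqx hqz).1]

lemma dropLastIco_subset_dropLastIco (h : x.dropLast = y.dropLast) (hxy : Llt x y) :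
    dropLastIco x ⊆ dropLastIco y := fun _ hz => ⟨h ▸ hz.1, llt_trans hz.2 hxy⟩

lemma nestedOrDisjoint_dropLastIco_of_length_le (hxy : x.dropLast.length ≤ y.dropLast.length)
    (hz : z ∈ dropLastIco x ∩ dropLastIco y) :
    NestedOrDisjoint (dropLastIco x) (dropLastIco y) := by
  have hpq : x.dropLast <+: y.dropLast := List.prefix_of_prefix_length_le
    (dropLast_prefix_of_mem_dropLastIco hz.1) (dropLast_prefix_of_mem_dropLastIco hz.2) hxy
  by_cases hpq_eq : x.dropLast = y.dropLast
  · by_cases hxy_eq : x = y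
    · exact Or.inl (hxy_eq ▸ subset_rfl)
    rcases llt_or_llt_of_ne hxy_eq with h | h
    · exact Or.inl (dropLastIco_subset_dropLastIco hpq_eq h)
    · exact Or.inr (Or.inl (dropLastIco_subset_dropLastIco hpq_eq.symm h))
  have hqp : ¬ y.dropLast <+: x.dropLast := fun h => hpq_eq (hpq.eq_of_length
    (hpq.length_le.antisymm h.length_le))
  by_cases hqx : y.dropLast <+: x
  · have hlen : x.length ≤ y.dropLast.length := by
      have := List.length_dropLast (xs := x)
      by_contra
      exact hqp (List.prefix_of_prefix_length_le hqx x.dropLast_prefix (by omega))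
    obtain hqx_eq : y.dropLast = x := hqx.eq_of_length (hqx.length_le.antisymm hlen)
    -- so `x ≤ z < x`
    obtain ⟨⟨-, hzx⟩, hqz, -⟩ := hz
    rw [hqx_eq] at hqz
    rcases hqz with rfl | hxz
    · exact absurd hzx (llt_irrefl z)
    · exact absurd hxz (llt_asymm hzx)
  · refine Or.inr (Or.inl fun w hw => ?_)
    exact (mem_dropLastIco_iff_of_not_prefix hqp hqx (dropLast_prefix_of_mem_dropLastIco hw)).2
      ((mem_dropLastIco_iff_of_not_prefix hqp hqx (dropLast_prefix_of_mem_dropLastIco hz.2)).1 hz.1)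

lemma nestedOrDisjoint_dropLastIco (x y : List SOrd) :
    NestedOrDisjoint (dropLastIco x) (dropLastIco y) := by
  refine NestedOrDisjoint.of_nonempty_imp fun ⟨z, hz⟩ => ?_
  rcases le_total x.dropLast.length y.dropLast.length with h | h
  · exact nestedOrDisjoint_dropLastIco_of_length_le h hz
  · exact (nestedOrDisjoint_dropLastIco_of_length_le h ⟨hz.2, hz.1⟩).symm

end DropLastIco

section Basic

variable {δ γ τ : Ordinal} {S : Ordinal → Set Ordinal} {B : Set (List SOrd)}

lemma jset_eq_inter_dropLastIco (x : List SOrd) : Jset δ γ x = Lset δ γ ∩ dropLastIco x := by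
  simp only [Jset, dropLastIco, List.dropLast_eq_take]
  rfl

lemma nil_llt_of_mem_lset {z : List SOrd} (hz : z ∈ Lset δ γ) : Llt [] z := by
  obtain ⟨-, ⟨h0, α, -, hα⟩, -⟩ := hz
  exact Or.inr (Or.inl ⟨h0, List.take_zero, α, hα⟩)

lemma lbelow_eq_inter_dropLastIco (α : Ordinal) :
    Lbelow δ γ α = Lset δ γ ∩ dropLastIco [SOrd.pos α] := by
  ext z
  exact ⟨fun hz => ⟨hz.1, Or.inr (nil_llt_of_mem_lset hz.1), hz.2⟩, fun hz => ⟨hz.1, hz.2.2⟩⟩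

lemma IsBasic.eq_singleton_or_eq_inter_dropLastIco (h : IsBasic δ γ τ S B) :
    (∃ z, B = {z}) ∨ ∃ x, B = Lset δ γ ∩ dropLastIco x := by
  rcases h with ⟨α, -, rfl⟩ | ⟨x, -, rfl⟩ | ⟨z, -, rfl⟩
  · exact Or.inr ⟨_, lbelow_eq_inter_dropLastIco α⟩
  · exact Or.inr ⟨x, jset_eq_inter_dropLastIco x⟩
  · exact Or.inl ⟨z, rfl⟩

end Basic

theorem basic_sets_trichotomy_general (δ γ τ : Ordinal)
    (S : Ordinal → Set Ordinal)
    (B₁ B₂ : Set (List SOrd)) (h1 : IsBasic δ γ τ S B₁) (h2 : IsBasic δ γ τ S B₂) :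
    B₁ ⊆ B₂ ∨ B₂ ⊆ B₁ ∨ B₁ ∩ B₂ = ∅ := by
  show NestedOrDisjoint B₁ B₂
  rcases h1.eq_singleton_or_eq_inter_dropLastIco with ⟨z, rfl⟩ | ⟨x, rfl⟩
  · exact .singleton z B₂
  rcases h2.eq_singleton_or_eq_inter_dropLastIco with ⟨z, rfl⟩ | ⟨y, rfl⟩
  · exact (NestedOrDisjoint.singleton z _).symm
  · exact (nestedOrDisjoint_dropLastIco x y).inter (Lset δ γ)

/-- For any two basic sets `B₁, B₂` of `⟨L^{δ,γ}, I^{Σ,γ}⟩`, either `B₁ ⊆ B₂`,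
or `B₂ ⊆ B₁`, or `B₁ ∩ B₂ = ∅`. -/
theorem basic_sets_trichotomy (δ γ τ : Ordinal) (hδ : δ ≠ 0) (hγ : γ ≠ 0)
    (S : Ordinal → Set Ordinal) (hS : IsPartition δ τ S)
    (B₁ B₂ : Set (List SOrd)) (h1 : IsBasic δ γ τ S B₁) (h2 : IsBasic δ γ τ S B₂) :
    B₁ ⊆ B₂ ∨ B₂ ⊆ B₁ ∨ B₁ ∩ B₂ = ∅ :=
  basic_sets_trichotomy_general δ γ τ S B₁ B₂ h1 h2
end

section
/- Let θ be an uncountable regular cardinal, δ, γ nonzero ordinals, and Σ = ⟨S_β : β < θ⟩ a partition of δ*. If A ⊆ L^{δ,γ} has cardinality less than θ, then the trace {A ∩ X : X ∈ I^{Σ,γ}} has cardinality less than θ; in particular the family I(A) := ⋃_{x∈A}{A ∩ X : X ∈ I^{Σ,γ}_x} ∪ {A} has cardinality less than θ. -/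
open Ordinal Cardinal

/-!
The trace on `A` of a finite union is the union of the traces, so it suffices to see that fewer
than `θ` sets `A ∩ B` arise from basic sets `B`. The sets `A ∩ L_α` form a chain indexed by the
ordinals, and a well-ordered chain of subsets of `A` has at most `|A| + 1` members. If `A ∩ J_x`
contains some `z`, then `x = y⌢⟨α⟩` with `y` a prefix of `z`, because `y ≤ z < y⌢⟨α⟩`. So these
traces lie in the chains `α ↦ A ∩ J_{y⌢⟨α⟩}`, one for each of the fewer than `θ` prefixes `y` of
elements of `A`.
-/

open Set

namespace SOrd

lemma pos_lt_pos {α β : Ordinal} (h : α < β) : pos α < pos β :=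
  Sum.Lex.inr_lt_inr_iff.2 h

lemma neg_lt_pos (ξ α : Ordinal) : neg ξ < pos α :=
  Sum.Lex.inl_lt_inr _ _

lemma exists_eq_neg_of_not_isPos {a : SOrd} (h : ¬ IsPos a) : ∃ ξ, a = neg ξ := by
  rcases a with (ξ | α)
  · exact ⟨OrderDual.ofDual ξ, rfl⟩
  · exact (h ⟨α, rfl⟩).elim

end SOrd

lemma List.take_append_getElem_cons_drop {α : Type*} (l : List α) {k : ℕ} (h : k < l.length) :
    l.take k ++ l[k] :: l.drop (k + 1) = l := by
  rw [List.getElem_cons_drop, List.take_append_drop]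

namespace Llt

/-- The terminator appended here lies between the negative and the positive entries, so that
`Llt` becomes part of the lexicographic order. -/
def key (x : List SOrd) : List (SOrd ×ₗ Bool) :=
  x.map (fun a => toLex (a, true)) ++ [toLex (SOrd.pos 0, false)]

lemma key_append_cons (p s : List SOrd) (a : SOrd) :
    key (p ++ a :: s) = p.map (fun a => toLex (a, true)) ++ toLex (a, true) :: key s := by
  simp [key]

lemma terminator_lt {a : SOrd} (h : SOrd.IsPos a) :
    toLex (SOrd.pos 0, false) < toLex (a, true) := by
  obtain ⟨α, rfl⟩ := h
  exact Prod.Lex.toLex_lt_toLex'.2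
    ⟨Sum.Lex.inr_le_inr_iff.2 (zero_le (a := α)), fun _ => Bool.false_lt_true⟩

lemma lt_terminator {a : SOrd} (h : ¬ SOrd.IsPos a) :
    toLex (a, true) < toLex (SOrd.pos 0, false) := by
  obtain ⟨ξ, rfl⟩ := SOrd.exists_eq_neg_of_not_isPos h
  exact Prod.Lex.toLex_lt_toLex.2 (Or.inl (SOrd.neg_lt_pos ξ 0))

lemma key_lt_key {x y : List SOrd} (h : Llt x y) : key x < key y := by
  rcases h with ⟨k, hx, hy, htake, hlt⟩ | ⟨hlen, htake, hpos⟩ | ⟨hlen, htake, hneg⟩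
  · rw [← x.take_append_getElem_cons_drop hx, ← y.take_append_getElem_cons_drop hy,
      key_append_cons, key_append_cons, htake]
    exact List.append_left_lt
      (List.cons_lt_cons_iff.2 (Or.inl (Prod.Lex.toLex_lt_toLex.2 (Or.inl hlt))))
  · rw [← y.take_append_getElem_cons_drop hlen, key_append_cons, htake]
    exact List.append_left_lt (List.cons_lt_cons_iff.2 (Or.inl (terminator_lt hpos)))
  · rw [← x.take_append_getElem_cons_drop hlen, key_append_cons, htake]
    exact List.append_left_lt (List.cons_lt_cons_iff.2 (Or.inl (lt_terminator hneg)))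

lemma asymm {x y : List SOrd} (h : Llt x y) : ¬ Llt y x :=
  fun h' => List.lt_asymm (key_lt_key h) (key_lt_key h')

lemma append_left_of_not_prefix {y z : List SOrd} (h : Llt y z) (hyz : ¬ y <+: z)
    (w : List SOrd) : Llt (y ++ w) z := by
  rcases h with ⟨k, hy, hz, htake, hlt⟩ | ⟨-, htake, -⟩ | ⟨hlen, htake, hneg⟩
  · refine Or.inl ⟨k, by simp; omega, hz, ?_, ?_⟩
    · rwa [List.take_append_of_le_length hy.le]
    · rwa [List.getElem_append_left hy]
  · exact (hyz (htake ▸ List.take_prefix _ _)).elim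
  · refine Or.inr (Or.inr ⟨by simp; omega, ?_, ?_⟩)
    · rwa [List.take_append_of_le_length hlen.le]
    · rwa [List.getElem_append_left hlen]

lemma prefix_of_le_of_lt_append {y z : List SOrd} {a : SOrd} (hyz : z = y ∨ Llt y z)
    (hzy : Llt z (y ++ [a])) : y <+: z := by
  rcases hyz with rfl | hyz
  · exact List.prefix_refl z
  · by_contra hp
    exact asymm hzy (append_left_of_not_prefix hyz hp [a])

lemma append_singleton_right {y z : List SOrd} {b b' : SOrd} (h : Llt z (y ++ [b]))
    (hb : b < b') (hb' : SOrd.IsPos b') : Llt z (y ++ [b']) := by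
  have htake : ∀ k ≤ y.length, (y ++ [b]).take k = (y ++ [b']).take k := fun k hk => by
    rw [List.take_append_of_le_length hk, List.take_append_of_le_length hk]
  have hle : ∀ k (hk : k < y.length + 1),
      (y ++ [b])[k]'(by simpa using hk) ≤ (y ++ [b'])[k]'(by simpa using hk) := by
    intro k hk
    rcases (Nat.lt_succ_iff.1 hk).lt_or_eq with hk | rfl
    · rw [List.getElem_append_left hk, List.getElem_append_left hk]
    · simpa using hb.le
  rcases h with ⟨k, hz, hk, hzk, hlt⟩ | ⟨hlen, hzk, hpos⟩ | ⟨hlen, hzk, -⟩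
  · simp only [List.length_append, List.length_singleton] at hk
    exact Or.inl ⟨k, hz, by simpa using hk, hzk.trans (htake k (by omega)),
      hlt.trans_le (hle k hk)⟩
  · simp only [List.length_append, List.length_singleton] at hlen
    refine Or.inr (Or.inl ⟨by simpa using hlen, (htake _ (by omega)).symm.trans hzk, ?_⟩)
    rcases (Nat.lt_succ_iff.1 hlen).lt_or_eq with hz | hz
    · rwa [List.getElem_append_left hz] at hpos ⊢
    · simpa [hz] using hb'
  · simp only [List.length_append, List.length_singleton] at hlen hzk
    have hz : y.length < z.length := by omega
    have hzy : z.take y.length = y := by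
      simpa [List.take_take] using congrArg (List.take y.length) hzk
    have hzb : z[y.length] = b := by
      simpa [List.getElem?_eq_getElem hz] using congrArg (·[y.length]?) hzk
    refine Or.inl ⟨y.length, hz, by simp, ?_, ?_⟩
    · simp [hzy]
    · simpa [hzb] using hb

end Llt

theorem Cardinal.mk_range_le_of_monotone {ι X : Type*} [LinearOrder ι] [WellFoundedLT ι]
    {f : ι → Set X} (hf : Monotone f) {A : Set X} (hA : ∀ i, f i ⊆ A) :
    #(range f) ≤ #A + 1 := by
  classical
  -- Each `T` in the chain is sent to a point of `A` that enters right after `T`, if any.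
  have hnext : ∀ T : range f, ∃ o : Option A, (∀ a ∈ o, (a : X) ∉ (T : Set X)) ∧
      ∀ i, (T : Set X) ⊂ f i → ∃ a ∈ o, (a : X) ∈ f i := by
    intro T
    by_cases hT : ∃ i, (T : Set X) ⊂ f i
    · obtain ⟨j, hj, hmin⟩ := wellFounded_lt.has_min {i | (T : Set X) ⊂ f i} hT
      obtain ⟨a, haj, haT⟩ := Set.exists_of_ssubset hj
      refine ⟨some ⟨a, hA j haj⟩, by simpa using haT, fun i hi => ⟨_, rfl, ?_⟩⟩
      exact hf (not_lt.1 (hmin i hi)) haj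
    · exact ⟨none, by simp, fun i hi => (hT ⟨i, hi⟩).elim⟩
  choose g hgT hgf using hnext
  have hsep : ∀ T U : range f, (T : Set X) ⊂ U → g T ≠ g U := by
    rintro T ⟨U, i, rfl⟩ hTU hg
    obtain ⟨a, ha, hai⟩ := hgf T i hTU
    exact hgT _ a (hg ▸ ha) hai
  have hinj : Function.Injective g := by
    rintro ⟨T, i, rfl⟩ ⟨U, j, rfl⟩ hg
    by_contra hne
    rcases le_total i j with hij | hij
    · exact hsep ⟨_, i, rfl⟩ ⟨_, j, rfl⟩ ((hf hij).ssubset_of_ne fun h => hne (by simp [h])) hg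
    · exact hsep ⟨_, j, rfl⟩ ⟨_, i, rfl⟩ ((hf hij).ssubset_of_ne fun h => hne (by simp [h]))
        hg.symm
  simpa using Cardinal.mk_le_of_injective hinj

theorem Cardinal.mk_finset_lt {κ : Cardinal} (hκ : ℵ₀ < κ) {β : Type*} (h : #β < κ) :
    #(Finset β) < κ := by
  classical
  exact (mk_le_of_surjective List.toFinset_surjective).trans_lt
    ((mk_list_le_max β).trans_lt (max_lt hκ h))

section Trace

variable {α : Type*}

def traceOn (A : Set α) (𝓕 : Set (Set α)) : Set (Set α) := {B | ∃ X ∈ 𝓕, B = A ∩ X}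

def finiteUnions (𝓑 : Set (Set α)) : Set (Set α) :=
  {X | ∃ E : Finset (Set α), (∀ B ∈ E, B ∈ 𝓑) ∧ X = ⋃ B ∈ E, B}

lemma traceOn_finiteUnions_subset (A : Set α) (𝓑 : Set (Set α)) :
    traceOn A (finiteUnions 𝓑) ⊆
      range fun E : Finset (traceOn A 𝓑) => ⋃ T ∈ E, (T : Set α) := by
  classical
  rintro _ ⟨_, ⟨E, hE, rfl⟩, rfl⟩
  refine ⟨E.attach.image fun B : E => ⟨A ∩ B, B, hE B B.2, rfl⟩, ?_⟩
  ext z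
  simp only [mem_iUnion, Finset.mem_image, Finset.mem_attach, true_and, mem_inter_iff]
  constructor
  · rintro ⟨_, ⟨B, rfl⟩, hz⟩
    exact ⟨hz.1, B, B.2, hz.2⟩
  · rintro ⟨hzA, B, hB, hzB⟩
    exact ⟨_, ⟨⟨B, hB⟩, rfl⟩, hzA, hzB⟩

lemma mk_traceOn_finiteUnions_lt {κ : Cardinal} (hκ : ℵ₀ < κ) {A : Set α} {𝓑 : Set (Set α)}
    (h : #(traceOn A 𝓑) < κ) : #(traceOn A (finiteUnions 𝓑)) < κ :=
  (mk_le_mk_of_subset (traceOn_finiteUnions_subset A 𝓑)).trans_lt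
    (mk_range_le.trans_lt (mk_finset_lt hκ h))

def prefixes (A : Set (List α)) : Set (List α) := {y | ∃ z ∈ A, y <+: z}

lemma mk_prefixes_le (A : Set (List α)) : #(prefixes A) ≤ #A * ℵ₀ := by
  have hA : prefixes A = ⋃ z ∈ A, {y | y ∈ z.inits} := by ext; simp [prefixes]
  rw [hA]
  refine (mk_biUnion_le _ A).trans ?_
  gcongr
  exact ciSup_le' fun z => (List.finite_toSet _).lt_aleph0.le

end Trace

section BasicSets

variable {δ γ τ : Ordinal} {S : Ordinal → Set Ordinal}

lemma Jset_append_singleton (y : List SOrd) (a : SOrd) :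
    Jset δ γ (y ++ [a]) = {z ∈ Lset δ γ | (z = y ∨ Llt y z) ∧ Llt z (y ++ [a])} := by
  simp [Jset]

lemma monotone_inter_Jset (A : Set (List SOrd)) (y : List SOrd) :
    Monotone fun α => A ∩ Jset δ γ (y ++ [SOrd.pos α]) := by
  intro α α' hα z ⟨hzA, hz⟩
  refine ⟨hzA, ?_⟩
  rw [Jset_append_singleton] at hz ⊢
  obtain ⟨hzL, hyz, hzy⟩ := hz
  rcases hα.lt_or_eq with hα | rfl
  · exact ⟨hzL, hyz, hzy.append_singleton_right (SOrd.pos_lt_pos hα) ⟨α', rfl⟩⟩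
  · exact ⟨hzL, hyz, hzy⟩

lemma monotone_inter_Lbelow (A : Set (List SOrd)) :
    Monotone fun α => A ∩ Lbelow δ γ α := by
  intro α α' hα z ⟨hzA, hzL, hz⟩
  rcases hα.lt_or_eq with hα | rfl
  · exact ⟨hzA, hzL, Llt.append_singleton_right (y := []) hz (SOrd.pos_lt_pos hα) ⟨α', rfl⟩⟩
  · exact ⟨hzA, hzL, hz⟩

lemma Relevant.eq_dropLast_append {x : List SOrd} (hx : Relevant δ γ τ S x) :
    ∃ α, x = x.dropLast ++ [SOrd.pos α] := by
  obtain ⟨-, hlen, hodd, hpar, -⟩ := hx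
  obtain ⟨α, hα⟩ := (hpar (x.length - 1) (by omega)).2 (by omega)
  refine ⟨α, ?_⟩
  rw [← hα, List.dropLast_eq_take, List.take_append_getElem, Nat.sub_add_cancel (by omega),
    List.take_length]

lemma Relevant.dropLast_prefix_of_mem_Jset {x z : List SOrd} (hx : Relevant δ γ τ S x)
    (hz : z ∈ Jset δ γ x) : x.dropLast <+: z := by
  obtain ⟨α, hxα⟩ := hx.eq_dropLast_append
  rw [hxα, Jset_append_singleton] at hz
  exact Llt.prefix_of_le_of_lt_append hz.2.1 hz.2.2

lemma traceOn_isBasic_subset (A : Set (List SOrd)) :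
    traceOn A {B | IsBasic δ γ τ S B} ⊆ insert ∅ (range (fun α => A ∩ Lbelow δ γ α) ∪
      (⋃ y ∈ prefixes A, range fun α => A ∩ Jset δ γ (y ++ [SOrd.pos α])) ∪
      range fun z : A => {(z : List SOrd)}) := by
  rintro _ ⟨B, hB, rfl⟩
  rcases hB with ⟨α, -, rfl⟩ | ⟨x, hx, rfl⟩ | ⟨z, -, rfl⟩
  · exact Or.inr (Or.inl (Or.inl ⟨α, rfl⟩))
  · rcases (A ∩ Jset δ γ x).eq_empty_or_nonempty with h | ⟨z, hzA, hz⟩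
    · exact Or.inl h
    · obtain ⟨α, hxα⟩ := hx.eq_dropLast_append
      refine Or.inr (Or.inl (Or.inr (mem_biUnion ⟨z, hzA, hx.dropLast_prefix_of_mem_Jset hz⟩
        ⟨α, congrArg (A ∩ Jset δ γ ·) hxα.symm⟩)))
  · by_cases hz : z ∈ A
    · exact Or.inr (Or.inr ⟨⟨z, hz⟩, (inter_eq_right.2 (singleton_subset_iff.2 hz)).symm⟩)
    · exact Or.inl (inter_singleton_eq_empty.2 hz)

lemma mk_traceOn_isBasic_lt {κ : Cardinal.{1}} (hκ : ℵ₀ < κ) {A : Set (List SOrd)}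
    (hA : #A < κ) : #(traceOn A {B | IsBasic δ γ τ S B}) < κ := by
  have h1 : (1 : Cardinal) < κ := one_lt_aleph0.trans hκ
  have hA1 : #A + 1 < κ := add_lt_of_lt hκ.le hA h1
  have hL : #(range fun α => A ∩ Lbelow δ γ α) < κ :=
    (mk_range_le_of_monotone (monotone_inter_Lbelow A) fun _ => inter_subset_left).trans_lt hA1
  have hP : #(prefixes A) < κ := (mk_prefixes_le A).trans_lt (mul_lt_of_lt hκ.le hA hκ)
  have hsup : (⨆ y : prefixes A, #(range fun α => A ∩ Jset δ γ (y.1 ++ [SOrd.pos α]))) < κ := by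
    refine lt_of_le_of_lt (ciSup_le' fun y => ?_) hA1
    exact mk_range_le_of_monotone (monotone_inter_Jset A y.1) fun _ => inter_subset_left
  have hJ : #(⋃ y ∈ prefixes A, range fun α => A ∩ Jset δ γ (y ++ [SOrd.pos α])) < κ :=
    (mk_biUnion_le (fun y => range fun α => A ∩ Jset δ γ (y ++ [SOrd.pos α])) (prefixes A)
      ).trans_lt (mul_lt_of_lt hκ.le hP hsup)
  have hS : #(range fun z : A => ({(z : List SOrd)} : Set (List SOrd))) < κ :=
    mk_range_le.trans_lt hA
  have hLJ := (mk_union_le _ _).trans_lt (add_lt_of_lt hκ.le hL hJ)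
  have hLJS := (mk_union_le _ _).trans_lt (add_lt_of_lt hκ.le hLJ hS)
  exact (mk_le_mk_of_subset (traceOn_isBasic_subset A)).trans_lt
    (mk_insert_le.trans_lt (add_lt_of_lt hκ.le hLJS h1))

end BasicSets

theorem trace_small_general (θ : Cardinal.{0}) (hθ : Cardinal.aleph0 < θ)
    (δ γ : Ordinal) (S : Ordinal → Set Ordinal) (A : Set (List SOrd))
    (hcard : Cardinal.mk A < Cardinal.lift.{1} θ) :
    Cardinal.mk {B : Set (List SOrd) | ∃ X ∈ Ifam δ γ θ.ord S, B = A ∩ X} <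
      Cardinal.lift.{1} θ ∧
    Cardinal.mk ({B | ∃ x ∈ A, ∃ X ∈ Ix δ γ θ.ord S x, B = A ∩ X} ∪ {A} :
        Set (Set (List SOrd))) < Cardinal.lift.{1} θ := by
  have hκ : ℵ₀ < Cardinal.lift.{1} θ := aleph0_lt_lift.2 hθ
  have htrace : #(traceOn A (Ifam δ γ θ.ord S)) < Cardinal.lift.{1} θ :=
    mk_traceOn_finiteUnions_lt hκ (mk_traceOn_isBasic_lt hκ hcard)
  refine ⟨htrace, ?_⟩
  have hsub : {B | ∃ x ∈ A, ∃ X ∈ Ix δ γ θ.ord S x, B = A ∩ X} ∪ {A} ⊆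
      traceOn A (Ifam δ γ θ.ord S) ∪ {A} := by
    rintro _ (⟨-, -, X, ⟨-, hX⟩, rfl⟩ | hB)
    · exact Or.inl ⟨X, hX, rfl⟩
    · exact Or.inr hB
  exact (mk_le_mk_of_subset hsub).trans_lt ((mk_union_le _ _).trans_lt
    (add_lt_of_lt hκ.le htrace (by simpa using one_lt_aleph0.trans hκ)))

/-- If `θ` is an uncountable regular cardinal, `Σ = ⟨S_β : β < θ⟩` a partition of
`δ*`, and `A ⊆ L^{δ,γ}` has size `< θ`, then the trace `{A ∩ X : X ∈ I^{Σ,γ}}`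
has size `< θ`; in particular `I(A) = ⋃_{x∈A} (I^{Σ,γ}_x ↾ A) ∪ {A}` has size `< θ`. -/
theorem trace_small (θ : Cardinal.{0}) (hθ : Cardinal.aleph0 < θ) (hreg : θ.IsRegular)
    (δ γ : Ordinal) (hδ : δ ≠ 0) (hγ : γ ≠ 0)
    (S : Ordinal → Set Ordinal) (hS : IsPartition δ θ.ord S)
    (A : Set (List SOrd)) (hA : A ⊆ Lset δ γ)
    (hcard : Cardinal.mk A < Cardinal.lift.{1} θ) :
    Cardinal.mk {B : Set (List SOrd) | ∃ X ∈ Ifam δ γ θ.ord S, B = A ∩ X} <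
      Cardinal.lift.{1} θ ∧
    Cardinal.mk ({B | ∃ x ∈ A, ∃ X ∈ Ix δ γ θ.ord S x, B = A ∩ X} ∪ {A} :
        Set (Set (List SOrd))) < Cardinal.lift.{1} θ :=
  trace_small_general θ hθ δ γ S A hcard
end
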